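/- arXiv:1908.06051 — 4 statements merged into one kernel-verified Lean document; each statement's English description precedes it below -/
import Mathlib

section
/- If a graph G of order n admits a prime labeling (an injective assignment of labels from {1,...,n} to the vertices such that adjacent vertices receive coprime labels), then the independence number of G is at least ⌊n/2⌋. -/
open Finset

theorem SimpleGraph.isIndepSet_setOf_dvd_label {V : Type*} {G : SimpleGraph V} {f : V → ℕ}
    (hcop : ∀ v w, G.Adj v w → Nat.Coprime (f v) (f w)) {d : ℕ} (hd : d ≠ 1) :
    G.IsIndepSet {v | d ∣ f v} :=
  fun _ hv _ hw _ hadj => hd (Nat.eq_one_of_dvd_coprimes (hcop _ _ hadj) hv hw)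

theorem Finset.image_univ_eq_Icc_of_injective {V : Type*} [Fintype V] {f : V → ℕ}
    (hinj : Function.Injective f) (hrange : ∀ v, f v ∈ Icc 1 (Fintype.card V)) :
    univ.image f = Icc 1 (Fintype.card V) :=
  eq_of_subset_of_card_le (image_subset_iff.2 fun v _ => hrange v)
    (by rw [card_image_of_injective _ hinj, Nat.card_Icc, card_univ, Nat.add_sub_cancel])

theorem Finset.card_filter_dvd_of_injective_Icc {V : Type*} [Fintype V] {f : V → ℕ}
    (hinj : Function.Injective f) (hrange : ∀ v, f v ∈ Icc 1 (Fintype.card V)) (d : ℕ) :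
    #{v | d ∣ f v} = Fintype.card V / d := by
  rw [← card_image_of_injective _ hinj, ← filter_image,
    image_univ_eq_Icc_of_injective hinj hrange, ← Nat.Ioc_filter_dvd_card_eq_div]
  rfl

theorem prime_labeling_indep_bound {V : Type*} [Fintype V] (G : SimpleGraph V)
    (f : V → ℕ) (hinj : Function.Injective f)
    (hrange : ∀ v, f v ∈ Finset.Icc 1 (Fintype.card V))
    (hcop : ∀ v w, G.Adj v w → Nat.Coprime (f v) (f w)) :
    ∃ s : Finset V, (∀ x ∈ s, ∀ y ∈ s, ¬ G.Adj x y) ∧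
      Fintype.card V / 2 ≤ s.card := by
  have hindep := G.isIndepSet_setOf_dvd_label hcop (d := 2) (by decide)
  refine ⟨({v | 2 ∣ f v} : Finset V), fun x hx y hy hxy => ?_,
    (card_filter_dvd_of_injective_Icc hinj hrange 2).ge⟩
  exact hindep (mem_filter.1 hx).2 (mem_filter.1 hy).2 hxy.ne hxy
end

section
/- If n is an odd prime, then the prism graph GP(n,1) admits a coprime labeling with largest label 2n+1; explicitly, the labeling assigning i to v_i for 1 ≤ i ≤ n, n+i to u_i for 1 ≤ i ≤ n−1, and 2n+1 to u_n, gives coprime labels to every pair of adjacent vertices. -/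
/-!
Labels on the cycle `v` are at most `n` and labels on the cycle `u` exceed `n`, so the labeling is
injective. Along both cycles neighbouring labels are consecutive integers, except at the
wrap-around: `v_n v_1` carries `n` and `1`, and `u_n` carries `2n + 1`, which is coprime to the
labels `n + 1`, `2n - 1` and `n` of its neighbours. A spoke `v_i u_i` with `i < n` carries `i` and
`n + i`, coprime because `n` is prime.
-/

/-- The prism graph `GP(n,1)`: two `n`-cycles `v` (inl) and `u` (inr) joined by a
perfect matching. -/
def prismGraph (n : ℕ) : SimpleGraph (ZMod n ⊕ ZMod n) :=
  SimpleGraph.fromRel (fun x y =>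
    (∃ i : ZMod n, x = Sum.inl i ∧ y = Sum.inl (i + 1)) ∨
    (∃ i : ZMod n, x = Sum.inr i ∧ y = Sum.inr (i + 1)) ∨
    (∃ i : ZMod n, x = Sum.inl i ∧ y = Sum.inr i))

/-- The labeling of Theorem (n prime): `v_i ↦ i` (1-based), `u_i ↦ n+i` for `i ≤ n-1`,
`u_n ↦ 2n+1`.  Here the vertex with value `j` represents index `j+1`. -/
def prismLabel (n : ℕ) : ZMod n ⊕ ZMod n → ℕ
  | Sum.inl i => i.val + 1
  | Sum.inr i => if i.val = n - 1 then 2 * n + 1 else n + i.val + 1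

open Nat

namespace ZMod

variable {n : ℕ}

lemma val_add_one_le [NeZero n] (i : ZMod n) : i.val + 1 ≤ n := i.val_lt

lemma val_add_one_of_lt {i : ZMod n} (h : i.val + 1 < n) : (i + 1).val = i.val + 1 := by
  have h1 : (1 : ZMod n).val = 1 := by rw [val_one_eq_one_mod, Nat.mod_eq_of_lt (by omega)]
  rw [val_add_of_lt (by omega), h1]

lemma val_add_one_of_eq [NeZero n] {i : ZMod n} (h : i.val + 1 = n) : (i + 1).val = 0 := by
  have : ((i.val + 1 : ℕ) : ZMod n) = 0 := by rw [h, natCast_self]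
  simpa using this

end ZMod

lemma Nat.coprime_two_mul_add_one_add_one (n : ℕ) : Coprime (2 * n + 1) (n + 1) := by
  rw [show 2 * n + 1 = n + (n + 1) by ring, coprime_add_self_left]
  simp

lemma Nat.coprime_add_two_of_odd {m : ℕ} (hm : Odd m) : Coprime m (m + 2) := by
  rwa [add_comm, coprime_add_self_right, coprime_two_right]

section

variable {n : ℕ}

@[simp]
lemma prismLabel_inl (i : ZMod n) : prismLabel n (.inl i) = i.val + 1 := rfl

lemma prismLabel_inr_of_lt {i : ZMod n} (h : i.val + 1 < n) :
    prismLabel n (.inr i) = n + i.val + 1 :=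
  if_neg (by omega)

lemma prismLabel_inr_of_eq {i : ZMod n} (h : i.val + 1 = n) :
    prismLabel n (.inr i) = 2 * n + 1 :=
  if_pos (by omega)

lemma prismLabel_inl_le [NeZero n] (i : ZMod n) : prismLabel n (.inl i) ≤ n := i.val_lt

lemma lt_prismLabel_inr [NeZero n] (i : ZMod n) : n < prismLabel n (.inr i) := by
  obtain h | h := i.val_add_one_le.lt_or_eq
  · rw [prismLabel_inr_of_lt h]; omega
  · rw [prismLabel_inr_of_eq h]; omega

lemma prismLabel_injective [NeZero n] : Function.Injective (prismLabel n) := by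
  rintro (i | i) (j | j) h
  · exact congrArg _ (ZMod.val_injective n (by simpa using h))
  · exact absurd h (prismLabel_inl_le i |>.trans_lt (lt_prismLabel_inr j)).ne
  · exact absurd h (prismLabel_inl_le j |>.trans_lt (lt_prismLabel_inr i)).ne'
  · refine congrArg _ (ZMod.val_injective n ?_)
    obtain hi | hi := i.val_add_one_le.lt_or_eq <;> obtain hj | hj := j.val_add_one_le.lt_or_eq
    all_goals
      simp only [prismLabel_inr_of_lt, prismLabel_inr_of_eq, hi, hj] at h
      omega

lemma prismLabel_mem_Icc [NeZero n] (x : ZMod n ⊕ ZMod n) :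
    prismLabel n x ∈ Finset.Icc 1 (2 * n + 1) := by
  rw [Finset.mem_Icc]
  obtain i | i := x
  · have := prismLabel_inl_le i
    rw [prismLabel_inl] at this ⊢
    omega
  · obtain h | h := i.val_add_one_le.lt_or_eq
    · rw [prismLabel_inr_of_lt h]; omega
    · rw [prismLabel_inr_of_eq h]; omega

lemma coprime_prismLabel_inl_add_one [NeZero n] (i : ZMod n) :
    Coprime (prismLabel n (.inl i)) (prismLabel n (.inl (i + 1))) := by
  obtain h | h := i.val_add_one_le.lt_or_eq
  · simp [ZMod.val_add_one_of_lt h]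
  · simp [ZMod.val_add_one_of_eq h]

lemma coprime_prismLabel_inr_add_one (hn : 1 < n) (i : ZMod n) :
    Coprime (prismLabel n (.inr i)) (prismLabel n (.inr (i + 1))) := by
  have : NeZero n := ⟨by omega⟩
  obtain h | h := i.val_add_one_le.lt_or_eq
  · have h' := ZMod.val_add_one_of_lt h
    rw [prismLabel_inr_of_lt h]
    obtain h₂ | h₂ := (i + 1).val_add_one_le.lt_or_eq
    · rw [prismLabel_inr_of_lt h₂, h', ← add_assoc]
      exact coprime_self_add_right.2 (coprime_one_right _)
    · rw [prismLabel_inr_of_eq h₂, show 2 * n + 1 = n + i.val + 1 + 2 by omega]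
      exact coprime_add_two_of_odd ⟨i.val + 1, by omega⟩
  · rw [prismLabel_inr_of_eq h, prismLabel_inr_of_lt (by rw [ZMod.val_add_one_of_eq h]; omega),
      ZMod.val_add_one_of_eq h]
    exact coprime_two_mul_add_one_add_one n

lemma coprime_prismLabel_inl_inr (hp : n.Prime) (i : ZMod n) :
    Coprime (prismLabel n (.inl i)) (prismLabel n (.inr i)) := by
  have : NeZero n := ⟨hp.ne_zero⟩
  obtain h | h := i.val_add_one_le.lt_or_eq
  · rw [prismLabel_inr_of_lt h, prismLabel_inl, add_assoc, coprime_add_self_right]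
    exact (coprime_of_lt_prime (by omega) h hp).symm
  · rw [prismLabel_inr_of_eq h, prismLabel_inl, h]
    simp

lemma coprime_prismLabel_of_adj (hp : n.Prime) {x y : ZMod n ⊕ ZMod n}
    (h : (prismGraph n).Adj x y) : Coprime (prismLabel n x) (prismLabel n y) := by
  have : NeZero n := ⟨hp.ne_zero⟩
  rw [prismGraph, SimpleGraph.fromRel_adj] at h
  obtain ⟨-, h | h⟩ := h
  on_goal 2 => apply Coprime.symm
  all_goals
    obtain ⟨i, rfl, rfl⟩ | ⟨i, rfl, rfl⟩ | ⟨i, rfl, rfl⟩ := h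
    exacts [coprime_prismLabel_inl_add_one i, coprime_prismLabel_inr_add_one hp.one_lt i,
      coprime_prismLabel_inl_inr hp i]

end

theorem prism_coprime_labeling_of_prime_general (n : ℕ) (hp : Nat.Prime n) :
    Function.Injective (prismLabel n) ∧
    (∀ x, prismLabel n x ∈ Finset.Icc 1 (2 * n + 1)) ∧
    (∃ x, prismLabel n x = 2 * n + 1) ∧
    (∀ x y, (prismGraph n).Adj x y →
      Nat.Coprime (prismLabel n x) (prismLabel n y)) := by
  have : NeZero n := ⟨hp.ne_zero⟩
  have hlast : ((n - 1 : ℕ) : ZMod n).val + 1 = n := by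
    rw [ZMod.val_cast_of_lt (sub_one_lt hp.ne_zero), Nat.sub_add_cancel hp.pos]
  exact ⟨prismLabel_injective, prismLabel_mem_Icc, ⟨.inr _, prismLabel_inr_of_eq hlast⟩,
    fun _ _ => coprime_prismLabel_of_adj hp⟩

theorem prism_coprime_labeling_of_prime (n : ℕ) (hn : 3 ≤ n) (hodd : Odd n)
    (hp : Nat.Prime n) :
    Function.Injective (prismLabel n) ∧
    (∀ x, prismLabel n x ∈ Finset.Icc 1 (2 * n + 1)) ∧
    (∃ x, prismLabel n x = 2 * n + 1) ∧
    (∀ x y, (prismGraph n).Adj x y →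
      Nat.Coprime (prismLabel n x) (prismLabel n y)) :=
  prism_coprime_labeling_of_prime_general n hp
end

section
/- For n ≥ 3 odd, the independence number of the prism graph GP(n,1) equals n − 1; in particular, GP(n,1) is not prime (no prime labeling exists), so any coprime labeling of GP(n,1) must use a label of at least 2n+1. -/
/-- A finset of vertices is independent if no two of its members are adjacent. -/
def IsIndepFinset {V : Type*} (G : SimpleGraph V) (s : Finset V) : Prop :=
  ∀ x ∈ s, ∀ y ∈ s, ¬ G.Adj x y

/-!
An independent set of `GP(n,1)` meets each rung `{v_i, u_i}` at most once, so it has at most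
`n` vertices. If it has exactly `n`, it meets every rung, and then it must switch cycle at
each step around the prism: `v_i` in the set forces `v_{i+1}` out, while `u_i` in the set
forces `u_{i+1}` out and hence `v_{i+1}` in. Going once around the cycle then switches `n`
times, so `n` is even.
For odd `n` the zigzag `v_0, u_1, v_2, …, v_{n-2}` of length `n - 1` is therefore optimal.
A prime labeling would make its `n` even labels an independent set, which is impossible.
-/

open Finset Sum

lemma ZMod.nsmul_eq_zero_of_map_add_one {n : ℕ} {G : Type*} [AddCommMonoid G]
    [IsLeftCancelAdd G] (f : ZMod n → G) (c : G) (hf : ∀ i, f (i + 1) = f i + c) :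
    n • c = 0 := by
  have hk (k : ℕ) : f k = f 0 + k • c := by
    induction k with
    | zero => simp
    | succ k ih => rw [Nat.cast_succ, hf, ih, add_assoc, succ_nsmul]
  have hn := hk n
  rw [ZMod.natCast_self] at hn
  exact add_eq_left.mp hn.symm

lemma ZMod.natCast_eq_natCast_iff_of_lt {n i j : ℕ} (hi : i < n) (hj : j < n) :
    (i : ZMod n) = j ↔ i = j := by
  rw [ZMod.natCast_eq_natCast_iff', Nat.mod_eq_of_lt hi, Nat.mod_eq_of_lt hj]

lemma Nat.card_filter_even_Icc_one_two_mul (m : ℕ) : ((Icc 1 (2 * m)).filter Even).card = m := by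
  rw [← zero_add 1, Icc_add_one_left_eq_Ioc]
  simpa [even_iff_two_dvd] using Nat.Ioc_filter_dvd_card_eq_div (2 * m) 2

/-- Witness: the vertices with even labels. -/
lemma exists_isIndepFinset_card_eq_of_primeLabeling {V : Type*} [Fintype V] {G : SimpleGraph V}
    {m : ℕ} (hV : Fintype.card V = 2 * m) {f : V → ℕ} (hinj : Function.Injective f)
    (hrange : ∀ x, f x ∈ Icc 1 (2 * m))
    (hcop : ∀ x y, G.Adj x y → Nat.Coprime (f x) (f y)) :
    ∃ s : Finset V, IsIndepFinset G s ∧ s.card = m := by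
  refine ⟨univ.filter fun x => Even (f x), ?_, ?_⟩
  · intro x hx y hy hadj
    rw [mem_filter] at hx hy
    exact Nat.not_coprime_of_dvd_of_dvd one_lt_two hx.2.two_dvd hy.2.two_dvd (hcop x y hadj)
  · have himage : univ.image f = Icc 1 (2 * m) := by
      refine eq_of_subset_of_card_le (fun _ hk => ?_) ?_
      · obtain ⟨x, -, rfl⟩ := mem_image.mp hk
        exact hrange x
      · rw [Nat.card_Icc, card_image_of_injective _ hinj, card_univ, hV, Nat.add_sub_cancel]
    rw [← card_image_of_injective _ hinj, ← filter_image, himage,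
      Nat.card_filter_even_Icc_one_two_mul]

namespace prismGraph

variable {n : ℕ}

@[simp]
lemma adj_inl_inl {a b : ZMod n} :
    (prismGraph n).Adj (inl a) (inl b) ↔ a ≠ b ∧ (b = a + 1 ∨ a = b + 1) := by
  simp [prismGraph]

@[simp]
lemma adj_inr_inr {a b : ZMod n} :
    (prismGraph n).Adj (inr a) (inr b) ↔ a ≠ b ∧ (b = a + 1 ∨ a = b + 1) := by
  simp [prismGraph]

@[simp]
lemma adj_inl_inr {a b : ZMod n} : (prismGraph n).Adj (inl a) (inr b) ↔ a = b := by
  simp [prismGraph, eq_comm]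

@[simp]
lemma adj_inr_inl {a b : ZMod n} : (prismGraph n).Adj (inr a) (inl b) ↔ a = b := by
  simp [prismGraph, eq_comm]

/-- The index `i` of the rung `{v_i, u_i}` through a vertex. -/
def rung : ZMod n ⊕ ZMod n → ZMod n := Sum.elim id id

lemma rung_injOn {s : Finset (ZMod n ⊕ ZMod n)} (hs : IsIndepFinset (prismGraph n) s) :
    Set.InjOn rung (s : Set (ZMod n ⊕ ZMod n)) := by
  rintro (a | a) ha (b | b) hb (hab : a = b) <;> subst hab
  · rfl
  · exact absurd (adj_inl_inr.mpr rfl) (hs _ ha _ hb)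
  · exact absurd (adj_inr_inl.mpr rfl) (hs _ ha _ hb)
  · rfl

section Upper

variable [NeZero n] {s : Finset (ZMod n ⊕ ZMod n)}

lemma card_le_of_isIndepFinset (hs : IsIndepFinset (prismGraph n) s) : s.card ≤ n := by
  rw [← card_image_of_injOn (rung_injOn hs)]
  exact (card_le_univ _).trans_eq (ZMod.card n)

lemma inl_mem_or_inr_mem_of_card_eq (hs : IsIndepFinset (prismGraph n) s) (hcard : s.card = n)
    (i : ZMod n) : inl i ∈ s ∨ inr i ∈ s := by
  have himage : s.image rung = univ := by
    apply eq_univ_of_card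
    rw [card_image_of_injOn (rung_injOn hs), hcard, ZMod.card]
  obtain ⟨x | x, hx, rfl⟩ := mem_image.mp (himage ▸ mem_univ i)
  exacts [Or.inl hx, Or.inr hx]

variable [Nontrivial (ZMod n)]

lemma inl_add_one_mem_iff (hs : IsIndepFinset (prismGraph n) s) (hcard : s.card = n)
    (i : ZMod n) : inl (i + 1) ∈ s ↔ inl i ∉ s := by
  have hne : i ≠ i + 1 := by simp
  refine ⟨fun h hi => hs _ hi _ h (adj_inl_inl.mpr ⟨hne, .inl rfl⟩), fun hi => ?_⟩
  have hri : inr i ∈ s := (inl_mem_or_inr_mem_of_card_eq hs hcard i).resolve_left hi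
  refine (inl_mem_or_inr_mem_of_card_eq hs hcard (i + 1)).resolve_right fun h => ?_
  exact hs _ hri _ h (adj_inr_inr.mpr ⟨hne, .inl rfl⟩)

lemma even_of_isIndepFinset_of_card_eq (hs : IsIndepFinset (prismGraph n) s)
    (hcard : s.card = n) : Even n := by
  classical
  let χ : ZMod n → ZMod 2 := fun i => if inl i ∈ s then 1 else 0
  have hχ (i : ZMod n) : χ (i + 1) = χ i + 1 := by
    by_cases hi : inl i ∈ s <;>
      simp [χ, hi, inl_add_one_mem_iff hs hcard i, CharTwo.add_self_eq_zero]
  have h := ZMod.nsmul_eq_zero_of_map_add_one χ 1 hχ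
  rwa [nsmul_one, ZMod.natCast_eq_zero_iff_even] at h

lemma card_le_sub_one_of_isIndepFinset_of_odd (hodd : Odd n)
    (hs : IsIndepFinset (prismGraph n) s) : s.card ≤ n - 1 := by
  have hle := card_le_of_isIndepFinset hs
  have hne : s.card ≠ n := fun h =>
    Nat.not_even_iff_odd.mpr hodd (even_of_isIndepFinset_of_card_eq hs h)
  omega

end Upper

def zigzag (n i : ℕ) : ZMod n ⊕ ZMod n := if Even i then inl i else inr i

lemma rung_zigzag (i : ℕ) : rung (zigzag n i) = i := by
  unfold zigzag; split_ifs <;> rfl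

lemma isIndepFinset_image_zigzag :
    IsIndepFinset (prismGraph n) ((range (n - 1)).image (zigzag n)) := by
  intro x hx y hy hadj
  obtain ⟨i, hi, rfl⟩ := mem_image.mp hx
  obtain ⟨j, hj, rfl⟩ := mem_image.mp hy
  rw [mem_range] at hi hj
  have hsucc {a b : ℕ} (ha : a < n - 1) (hb : b < n - 1) (h : (b : ZMod n) = a + 1) :
      b = a + 1 :=
    (ZMod.natCast_eq_natCast_iff_of_lt (n := n) (i := b) (j := a + 1) (by omega) (by omega)).mp
      (by rw [h, Nat.cast_succ])
  unfold zigzag at hadj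
  split_ifs at hadj with hi' hj' hj'
  · rcases (adj_inl_inl.mp hadj).2 with h | h
    · exact Nat.even_add_one.mp (hsucc hi hj h ▸ hj') hi'
    · exact Nat.even_add_one.mp (hsucc hj hi h ▸ hi') hj'
  · have hij := (ZMod.natCast_eq_natCast_iff_of_lt (by omega) (by omega)).mp (adj_inl_inr.mp hadj)
    exact hj' (hij ▸ hi')
  · have hij := (ZMod.natCast_eq_natCast_iff_of_lt (by omega) (by omega)).mp (adj_inr_inl.mp hadj)
    exact hi' (hij ▸ hj')
  · rcases (adj_inr_inr.mp hadj).2 with h | h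
    · exact hj' (hsucc hi hj h ▸ Nat.even_add_one.mpr hi')
    · exact hi' (hsucc hj hi h ▸ Nat.even_add_one.mpr hj')

lemma exists_isIndepFinset_card_eq_sub_one [NeZero n] :
    ∃ s : Finset (ZMod n ⊕ ZMod n), IsIndepFinset (prismGraph n) s ∧ s.card = n - 1 := by
  refine ⟨_, isIndepFinset_image_zigzag, ?_⟩
  rw [card_image_of_injOn, card_range]
  intro i hi j hj hij
  have hrung := congrArg rung hij
  simp only [rung_zigzag, coe_range, Set.mem_Iio] at hrung hi hj
  exact (ZMod.natCast_eq_natCast_iff_of_lt (by omega) (by omega)).mp hrung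

end prismGraph

theorem prism_odd_indepNum_and_not_prime (n : ℕ) (hn : 3 ≤ n) (hodd : Odd n) :
    -- the independence number of GP(n,1) equals n - 1
    ((∃ s : Finset (ZMod n ⊕ ZMod n), IsIndepFinset (prismGraph n) s ∧ s.card = n - 1) ∧
      (∀ s : Finset (ZMod n ⊕ ZMod n), IsIndepFinset (prismGraph n) s → s.card ≤ n - 1)) ∧
    -- GP(n,1) admits no prime labeling
    (¬ ∃ f : ZMod n ⊕ ZMod n → ℕ, Function.Injective f ∧
        (∀ x, f x ∈ Finset.Icc 1 (2 * n)) ∧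
        (∀ x y, (prismGraph n).Adj x y → Nat.Coprime (f x) (f y))) ∧
    -- any coprime labeling uses a label of size at least 2n+1
    (∀ f : ZMod n ⊕ ZMod n → ℕ, Function.Injective f → (∀ x, 1 ≤ f x) →
      (∀ x y, (prismGraph n).Adj x y → Nat.Coprime (f x) (f y)) →
      ∃ x, 2 * n + 1 ≤ f x) := by
  have : NeZero n := ⟨by omega⟩
  have : Fact (1 < n) := ⟨by omega⟩
  have hupper (s : Finset (ZMod n ⊕ ZMod n)) (hs : IsIndepFinset (prismGraph n) s) :
      s.card ≤ n - 1 :=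
    prismGraph.card_le_sub_one_of_isIndepFinset_of_odd hodd hs
  have hnotprime : ¬ ∃ f : ZMod n ⊕ ZMod n → ℕ, Function.Injective f ∧
      (∀ x, f x ∈ Finset.Icc 1 (2 * n)) ∧
      (∀ x y, (prismGraph n).Adj x y → Nat.Coprime (f x) (f y)) := by
    rintro ⟨f, hinj, hrange, hcop⟩
    have hV : Fintype.card (ZMod n ⊕ ZMod n) = 2 * n := by
      rw [Fintype.card_sum, ZMod.card, two_mul]
    obtain ⟨s, hs, hcard⟩ := exists_isIndepFinset_card_eq_of_primeLabeling hV hinj hrange hcop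
    have := hupper s hs
    omega
  refine ⟨⟨prismGraph.exists_isIndepFinset_card_eq_sub_one, hupper⟩, hnotprime, ?_⟩
  intro f hinj hpos hcop
  by_contra! hsmall
  exact hnotprime ⟨f, hinj, fun x => mem_Icc.mpr ⟨hpos x, by have := hsmall x; omega⟩, hcop⟩
end

section
/- Any coprime labeling of the generalized Petersen graph GP(5m,2) (m ≥ 1) has largest label at least 12m − 1. -/
/-- The generalized Petersen graph `GP(n,k)`: outer cycle `v` (inl) with edges
`v_i v_{i+1}`, inner vertices `u` (inr) with edges `u_i u_{i+k}` (indices mod `n`),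
and spokes `v_i u_i`. -/
def genPetersen (n k : ℕ) : SimpleGraph (ZMod n ⊕ ZMod n) :=
  SimpleGraph.fromRel (fun x y =>
    (∃ i : ZMod n, x = Sum.inl i ∧ y = Sum.inl (i + 1)) ∨
    (∃ i : ZMod n, x = Sum.inr i ∧ y = Sum.inr (i + (k : ZMod n))) ∨
    (∃ i : ZMod n, x = Sum.inl i ∧ y = Sum.inr i))

/-!
The even labels of a coprime labeling form an independent set. Cut the vertices of `GP(5m,2)`
into the `m` blocks `{v_i, u_i : 5j ≤ i < 5j + 5}`: each block contains the outer path
`v_{5j} … v_{5j+4}`, the inner edges `u_i u_{i+2}` and the spokes, and this subgraph has no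
independent set of five vertices. Hence at most `4m` labels are even, and the at least `6m`
remaining labels are distinct odd numbers, the largest of which is at least `12m - 1`.
-/

open Finset

theorem genPetersen_adj_inl_inl {n : ℕ} [Fact (1 < n)] (k : ℕ) (i : ZMod n) :
    (genPetersen n k).Adj (.inl i) (.inl (i + 1)) := by
  rw [genPetersen, SimpleGraph.fromRel_adj]
  exact ⟨by simp, .inl (.inl ⟨i, rfl, rfl⟩)⟩

theorem genPetersen_adj_inr_inr {n k : ℕ} (hk : (k : ZMod n) ≠ 0) (i : ZMod n) :
    (genPetersen n k).Adj (.inr i) (.inr (i + k)) := by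
  rw [genPetersen, SimpleGraph.fromRel_adj]
  exact ⟨by simpa using hk, .inl (.inr (.inl ⟨i, rfl, rfl⟩))⟩

theorem genPetersen_adj_inl_inr {n : ℕ} (k : ℕ) (i : ZMod n) :
    (genPetersen n k).Adj (.inl i) (.inr i) := by
  rw [genPetersen, SimpleGraph.fromRel_adj]
  exact ⟨by simp, .inl (.inr (.inr ⟨i, rfl, rfl⟩))⟩

theorem SimpleGraph.IsIndepSet.ite_add_ite_le_one {V : Type*} {G : SimpleGraph V} {s : Set V}
    [DecidablePred (· ∈ s)] (hs : G.IsIndepSet s) {x y : V} (h : G.Adj x y) :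
    (if x ∈ s then 1 else 0) + (if y ∈ s then 1 else 0) ≤ 1 := by
  by_cases hx : x ∈ s
  · have hy : y ∉ s := fun hy => hs hx hy h.ne h
    simp [hx, hy]
  · split_ifs <;> simp

theorem SimpleGraph.isIndepSet_setOf_even {V : Type*} {G : SimpleGraph V} {f : V → ℕ}
    (hcop : ∀ x y, G.Adj x y → (f x).Coprime (f y)) : G.IsIndepSet {x | Even (f x)} :=
  fun x hx y hy _ hadj => Nat.not_coprime_of_dvd_of_dvd one_lt_two
    (even_iff_two_dvd.mp hx) (even_iff_two_dvd.mp hy) (hcop x y hadj)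

theorem ZMod.sum_eq_sum_range_natCast {M : Type*} [AddCommMonoid M] (n : ℕ) [NeZero n]
    (g : ZMod n → M) : ∑ x, g x = ∑ i ∈ range n, g i :=
  sum_nbij' ZMod.val (fun i => i) (by simp [ZMod.val_lt]) (by simp)
    (by simp) (fun i hi => ZMod.val_cast_of_lt (mem_range.mp hi)) (by simp)

theorem Finset.sum_range_mul_le {g : ℕ → ℕ} {k c : ℕ} (h : ∀ i, ∑ r ∈ range k, g (i + r) ≤ c)
    (m : ℕ) : ∑ i ∈ range (k * m), g i ≤ c * m := by
  induction m with
  | zero => simp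
  | succ m ih => rw [Nat.mul_succ, sum_range_add, Nat.mul_succ]; exact add_le_add ih (h _)

/-- `a`, `b` are the indicators of an independent set of `GP(n,2)` on the outer and inner
vertices. -/
theorem sum_range_five_le_four {a b : ℕ → ℕ} (ha : ∀ i, a i + a (i + 1) ≤ 1)
    (hb : ∀ i, b i + b (i + 2) ≤ 1) (hab : ∀ i, a i + b i ≤ 1) (i : ℕ) :
    ∑ r ∈ range 5, (a (i + r) + b (i + r)) ≤ 4 := by
  simp only [sum_range_succ, sum_range_zero]
  have := ha i; have := ha (i + 1); have := ha (i + 2); have := ha (i + 3)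
  have := hb i; have := hb (i + 1); have := hb (i + 2)
  have := hab i; have := hab (i + 1); have := hab (i + 2); have := hab (i + 3); have := hab (i + 4)
  simp only [add_assoc, Nat.reduceAdd, add_zero] at *
  omega

theorem Finset.card_le_of_forall_odd_le {s : Finset ℕ} {N : ℕ}
    (h : ∀ x ∈ s, Odd x ∧ x ≤ 2 * N) : #s ≤ N := by
  calc #s ≤ #((range N).image (2 * · + 1)) := card_le_card fun x hx => by
          obtain ⟨⟨j, rfl⟩, hle⟩ := h x hx
          simp only [mem_image, mem_range]
          exact ⟨j, by omega, rfl⟩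
    _ ≤ N := card_image_le.trans (card_range N).le

theorem genPetersen_five_mul_two_isIndepSet_card_le {m : ℕ} (hm : 0 < m)
    (s : Finset (ZMod (5 * m) ⊕ ZMod (5 * m))) (hs : (genPetersen (5 * m) 2).IsIndepSet s) :
    #s ≤ 4 * m := by
  have : NeZero (5 * m) := ⟨by omega⟩
  have : Fact (1 < 5 * m) := ⟨by omega⟩
  have h2 : ((2 : ℕ) : ZMod (5 * m)) ≠ 0 := by
    rw [Ne, ZMod.natCast_eq_zero_iff]
    intro h
    have := Nat.le_of_dvd two_pos h
    omega
  set a : ℕ → ℕ := fun i => if .inl (i : ZMod (5 * m)) ∈ s then 1 else 0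
  set b : ℕ → ℕ := fun i => if .inr (i : ZMod (5 * m)) ∈ s then 1 else 0
  have ha : ∀ i, a i + a (i + 1) ≤ 1 := fun i => by
    simpa [a] using hs.ite_add_ite_le_one (genPetersen_adj_inl_inl 2 (i : ZMod (5 * m)))
  have hb : ∀ i, b i + b (i + 2) ≤ 1 := fun i => by
    simpa [b] using hs.ite_add_ite_le_one (genPetersen_adj_inr_inr h2 (i : ZMod (5 * m)))
  have hab : ∀ i, a i + b i ≤ 1 := fun i =>
    hs.ite_add_ite_le_one (genPetersen_adj_inl_inr 2 (i : ZMod (5 * m)))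
  calc #s = ∑ x, if x ∈ s then 1 else 0 := by simp
    _ = ∑ i ∈ range (5 * m), (a i + b i) := by
      rw [Fintype.sum_sum_type, ← sum_add_distrib, ZMod.sum_eq_sum_range_natCast]
    _ ≤ 4 * m := sum_range_mul_le (sum_range_five_le_four ha hb hab) m

theorem gp5m2_coprime_labeling_lower_bound_general (m : ℕ)
    (f : ZMod (5 * m) ⊕ ZMod (5 * m) → ℕ) (hinj : Function.Injective f)
    (hcop : ∀ x y, (genPetersen (5 * m) 2).Adj x y → Nat.Coprime (f x) (f y)) :
    ∃ x, 12 * m - 1 ≤ f x := by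
  by_contra! hlt
  have hm : 0 < m := by have := hlt (.inl 0); omega
  have : NeZero (5 * m) := ⟨by omega⟩
  set evens := univ.filter fun x => Even (f x)
  set odds := univ.filter fun x => ¬Even (f x)
  have h_evens : #evens ≤ 4 * m := genPetersen_five_mul_two_isIndepSet_card_le hm evens
    (by simpa [evens] using SimpleGraph.isIndepSet_setOf_even hcop)
  have h_odds : #odds ≤ 6 * m - 1 := by
    rw [← card_image_of_injective odds hinj]
    refine card_le_of_forall_odd_le fun y hy => ?_
    obtain ⟨x, hx, rfl⟩ := mem_image.mp hy
    have := hlt x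
    exact ⟨Nat.not_even_iff_odd.mp (mem_filter.mp hx).2, by omega⟩
  have h_total : #evens + #odds = 10 * m := by
    rw [card_filter_add_card_filter_not, card_univ, Fintype.card_sum, ZMod.card]; ring
  omega

theorem gp5m2_coprime_labeling_lower_bound (m : ℕ) (hm : 1 ≤ m)
    (f : ZMod (5 * m) ⊕ ZMod (5 * m) → ℕ) (hinj : Function.Injective f)
    (hpos : ∀ x, 1 ≤ f x)
    (hcop : ∀ x y, (genPetersen (5 * m) 2).Adj x y → Nat.Coprime (f x) (f y)) :
    ∃ x, 12 * m - 1 ≤ f x :=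
  gp5m2_coprime_labeling_lower_bound_general m f hinj hcop
end
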